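/- arXiv:1802.01895 — 4 statements merged into one kernel-verified Lean document; each statement's English description precedes it below -/
import Mathlib

section
/- Let H be a real Hilbert space, let R : H → [0,∞] be convex and absolutely one-homogeneous, let α > 0, and let f = f₀ + g with f₀, g ∈ H, R(f₀) = 0 and ⟪f₀, g⟫ = 0. If û ∈ H minimises the functional u ↦ ½‖u − f‖² + α·R(u) over H, then u⋆ := û − f₀ minimises the functional u ↦ ½‖u − g‖² + α·R(u) over H and satisfies ⟪f₀, u⋆⟫ = 0. -/
/-!
A convex, absolutely one-homogeneous `R` is subadditive, so adding an element of its null space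
(such as any multiple of `f₀`) does not change `R`. Translating by `f₀` therefore turns the problem
for `f` into the problem for `g`. Along the line `uhat + s • f₀` only the fidelity term varies, and
`R uhat < ∞` (compare with `u = 0`), so minimality at `s = 0` of this quadratic in `s` forces
`⟪uhat - f, f₀⟫ = 0`; with `⟪f₀, g⟫ = 0` this is `⟪f₀, uhat - f₀⟫ = 0`.
-/

open scoped ENNReal RealInnerProductSpace

section AbsolutelyOneHomogeneous

variable {E : Type*} [AddCommGroup E] [Module ℝ E] {R : E → ℝ≥0∞}

theorem map_zero_of_abs_homogeneous
    (hhom : ∀ (c : ℝ) (u : E), R (c • u) = ENNReal.ofReal |c| * R u) : R 0 = 0 := by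
  simpa using hhom 0 0

theorem map_smul_eq_zero_of_abs_homogeneous
    (hhom : ∀ (c : ℝ) (u : E), R (c • u) = ENNReal.ofReal |c| * R u) {w : E} (hw : R w = 0)
    (c : ℝ) : R (c • w) = 0 := by
  rw [hhom, hw, mul_zero]

theorem map_add_le_of_convex_of_abs_homogeneous
    (hconv : ∀ (u v : E) (t : ℝ), 0 ≤ t → t ≤ 1 →
      R (t • u + (1 - t) • v) ≤ ENNReal.ofReal t * R u + ENNReal.ofReal (1 - t) * R v)
    (hhom : ∀ (c : ℝ) (u : E), R (c • u) = ENNReal.ofReal |c| * R u) (u v : E) :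
    R (u + v) ≤ R u + R v := by
  have hmid : (2 : ℝ) • ((1 / 2 : ℝ) • u + (1 - 1 / 2 : ℝ) • v) = u + v := by
    rw [smul_add, smul_smul, smul_smul]; norm_num
  calc R (u + v) = ENNReal.ofReal 2 * R ((1 / 2 : ℝ) • u + (1 - 1 / 2 : ℝ) • v) := by
        rw [← hmid, hhom, abs_two]
    _ ≤ ENNReal.ofReal 2 * (ENNReal.ofReal (1 / 2) * R u + ENNReal.ofReal (1 - 1 / 2) * R v) := by
        gcongr; exact hconv u v _ (by norm_num) (by norm_num)
    _ = R u + R v := by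
        rw [mul_add, ← mul_assoc, ← mul_assoc, ← ENNReal.ofReal_mul zero_le_two,
          ← ENNReal.ofReal_mul zero_le_two]
        norm_num

theorem map_add_of_map_eq_zero
    (hconv : ∀ (u v : E) (t : ℝ), 0 ≤ t → t ≤ 1 →
      R (t • u + (1 - t) • v) ≤ ENNReal.ofReal t * R u + ENNReal.ofReal (1 - t) * R v)
    (hhom : ∀ (c : ℝ) (u : E), R (c • u) = ENNReal.ofReal |c| * R u) {w : E} (hw : R w = 0)
    (u : E) : R (u + w) = R u := by
  have hsub := map_add_le_of_convex_of_abs_homogeneous hconv hhom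
  refine le_antisymm ((hsub u w).trans (by rw [hw, add_zero])) ?_
  calc R u = R ((u + w) + (-1 : ℝ) • w) := by rw [neg_one_smul, add_neg_cancel_right]
    _ ≤ R (u + w) + R ((-1 : ℝ) • w) := hsub _ _
    _ = R (u + w) := by rw [map_smul_eq_zero_of_abs_homogeneous hhom hw, add_zero]

end AbsolutelyOneHomogeneous

theorem real_inner_eq_zero_of_forall_norm_sq_le_norm_add_smul_sq {F : Type*}
    [NormedAddCommGroup F] [InnerProductSpace ℝ F] {x y : F}
    (h : ∀ s : ℝ, ‖x‖ ^ 2 ≤ ‖x + s • y‖ ^ 2) : ⟪x, y⟫ = 0 := by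
  have hquad : ∀ s : ℝ, 0 ≤ ‖y‖ ^ 2 * (s * s) + (2 * ⟪x, y⟫) * s + 0 := fun s => by
    have := h s
    rw [norm_add_sq_real, real_inner_smul_right, norm_smul, mul_pow, Real.norm_eq_abs, sq_abs] at this
    nlinarith
  have := discrim_le_zero hquad
  rw [discrim] at this
  nlinarith [sq_nonneg ⟪x, y⟫]

section RegularizedEnergy

variable {F : Type*} [NormedAddCommGroup F]

noncomputable def regularizedEnergy (R : F → ℝ≥0∞) (α : ℝ) (f u : F) : ℝ≥0∞ :=
  ENNReal.ofReal (‖u - f‖ ^ 2 / 2) + ENNReal.ofReal α * R u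

variable {R : F → ℝ≥0∞} {α : ℝ}

theorem regularizedEnergy_sub_sub {w : F} (hw : ∀ u, R (u + w) = R u) (f u : F) :
    regularizedEnergy R α (f - w) (u - w) = regularizedEnergy R α f u := by
  rw [regularizedEnergy, regularizedEnergy, sub_sub_sub_cancel_right, ← hw (u - w), sub_add_cancel]

theorem map_ne_top_of_forall_regularizedEnergy_le (hα : 0 < α) (hR0 : R 0 ≠ ⊤) {f uhat : F}
    (hmin : ∀ u, regularizedEnergy R α f uhat ≤ regularizedEnergy R α f u) : R uhat ≠ ⊤ := by
  intro htop
  have h0 := hmin 0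
  rw [regularizedEnergy, regularizedEnergy, htop, ENNReal.mul_top (by positivity), add_top,
    top_le_iff] at h0
  exact ENNReal.add_ne_top.2 ⟨ENNReal.ofReal_ne_top, ENNReal.mul_ne_top ENNReal.ofReal_ne_top hR0⟩ h0

theorem inner_sub_eq_zero_of_forall_regularizedEnergy_le [InnerProductSpace ℝ F] {f uhat y : F} (hfin : R uhat ≠ ⊤)
    (hy : ∀ s : ℝ, R (uhat + s • y) = R uhat)
    (hmin : ∀ u, regularizedEnergy R α f uhat ≤ regularizedEnergy R α f u) :
    ⟪uhat - f, y⟫ = 0 := by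
  refine real_inner_eq_zero_of_forall_norm_sq_le_norm_add_smul_sq fun s => ?_
  have h := hmin (uhat + s • y)
  rw [regularizedEnergy, regularizedEnergy, hy,
    ENNReal.add_le_add_iff_right (ENNReal.mul_ne_top ENNReal.ofReal_ne_top hfin),
    ENNReal.ofReal_le_ofReal_iff (by positivity), add_sub_right_comm] at h
  linarith

end RegularizedEnergy

/-- In a real Hilbert space, if `uhat` minimises
`u ↦ ½‖u − f‖² + α·R(u)` with `f = f₀ + g`, `R f₀ = 0` and `⟪f₀, g⟫ = 0`,
then `u⋆ = uhat − f₀` minimises `u ↦ ½‖u − g‖² + α·R(u)` and `⟪f₀, u⋆⟫ = 0`. -/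
theorem stmt1 {H : Type*} [NormedAddCommGroup H] [InnerProductSpace ℝ H] (R : H → ℝ≥0∞)
    (hconv : ∀ (u v : H) (t : ℝ), 0 ≤ t → t ≤ 1 →
      R (t • u + (1 - t) • v) ≤ ENNReal.ofReal t * R u + ENNReal.ofReal (1 - t) * R v)
    (hhom : ∀ (c : ℝ) (u : H), R (c • u) = ENNReal.ofReal |c| * R u)
    (α : ℝ) (hα : 0 < α) (f f₀ g : H) (hfdec : f = f₀ + g) (hf₀ : R f₀ = 0)
    (horth : (inner ℝ f₀ g : ℝ) = 0) (uhat : H)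
    (hmin : ∀ u : H,
      ENNReal.ofReal (‖uhat - f‖ ^ 2 / 2) + ENNReal.ofReal α * R uhat ≤
        ENNReal.ofReal (‖u - f‖ ^ 2 / 2) + ENNReal.ofReal α * R u) :
    (∀ u : H,
      ENNReal.ofReal (‖(uhat - f₀) - g‖ ^ 2 / 2) + ENNReal.ofReal α * R (uhat - f₀) ≤
        ENNReal.ofReal (‖u - g‖ ^ 2 / 2) + ENNReal.ofReal α * R u) ∧
    (inner ℝ f₀ (uhat - f₀) : ℝ) = 0 := by
  have hshift : ∀ u, R (u + f₀) = R u := map_add_of_map_eq_zero hconv hhom hf₀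
  have hg : f - f₀ = g := by rw [hfdec, add_sub_cancel_left]
  constructor
  · intro u
    have h := hmin (u + f₀)
    rwa [← regularizedEnergy, ← regularizedEnergy, ← regularizedEnergy_sub_sub hshift,
      ← regularizedEnergy_sub_sub hshift f (u + f₀), add_sub_cancel_right, hg] at h
  · have hfin : R uhat ≠ ⊤ := map_ne_top_of_forall_regularizedEnergy_le hα
      (by rw [map_zero_of_abs_homogeneous hhom]; exact ENNReal.zero_ne_top) hmin
    have hstat : ⟪uhat - f, f₀⟫ = 0 := inner_sub_eq_zero_of_forall_regularizedEnergy_le hfin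
      (fun s => map_add_of_map_eq_zero hconv hhom
        (map_smul_eq_zero_of_abs_homogeneous hhom hf₀ s) uhat) hmin
    have hsplit : uhat - f₀ = (uhat - f) + g := by rw [hfdec]; abel
    rw [hsplit, inner_add_right, horth, add_zero, real_inner_comm, hstat]
end

section
/- Let β₁, β₂, β₃, β₄ ≥ 0 with β₃ = β₄, let θ ∈ [0, 2π), let Q = Q(θ) be the rotation of ℝ² with matrix ((cos θ, −sin θ), (sin θ, cos θ)), let w : ℝ² → ℝ² and let x ∈ ℝ² be such that w is differentiable at Q x. Then, with w̌(y) = Qᵀ w(Q y), one has β₁·curl(w̌)(x)² + β₂·div(w̌)(x)² + β₃·sh₁(w̌)(x)² + β₄·sh₂(w̌)(x)² = β₁·curl(w)(Q x)² + β₂·div(w)(Q x)² + β₃·sh₁(w)(Q x)² + β₄·sh₂(w)(Q x)². -/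
/-- Rotation of `ℝ²` by angle `θ`, with matrix `((cos θ, −sin θ), (sin θ, cos θ))`. -/
noncomputable def rotQ (θ : ℝ) (p : ℝ × ℝ) : ℝ × ℝ :=
  (Real.cos θ * p.1 - Real.sin θ * p.2, Real.sin θ * p.1 + Real.cos θ * p.2)

/-- Transpose (inverse) of the rotation `rotQ θ`. -/
noncomputable def rotQT (θ : ℝ) (p : ℝ × ℝ) : ℝ × ℝ :=
  (Real.cos θ * p.1 + Real.sin θ * p.2, -Real.sin θ * p.1 + Real.cos θ * p.2)

/-- `curl(w)(x) = ∂w₂/∂x₁ − ∂w₁/∂x₂` via the Fréchet derivative. -/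
noncomputable def curlOp (w : ℝ × ℝ → ℝ × ℝ) (x : ℝ × ℝ) : ℝ :=
  (fderiv ℝ w x (1, 0)).2 - (fderiv ℝ w x (0, 1)).1

/-- `div(w)(x) = ∂w₁/∂x₁ + ∂w₂/∂x₂` via the Fréchet derivative. -/
noncomputable def divOp (w : ℝ × ℝ → ℝ × ℝ) (x : ℝ × ℝ) : ℝ :=
  (fderiv ℝ w x (1, 0)).1 + (fderiv ℝ w x (0, 1)).2

/-- `sh₁(w)(x) = ∂w₂/∂x₂ − ∂w₁/∂x₁` via the Fréchet derivative. -/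
noncomputable def sh1Op (w : ℝ × ℝ → ℝ × ℝ) (x : ℝ × ℝ) : ℝ :=
  (fderiv ℝ w x (0, 1)).2 - (fderiv ℝ w x (1, 0)).1

/-- `sh₂(w)(x) = ∂w₁/∂x₂ + ∂w₂/∂x₁` via the Fréchet derivative. -/
noncomputable def sh2Op (w : ℝ × ℝ → ℝ × ℝ) (x : ℝ × ℝ) : ℝ :=
  (fderiv ℝ w x (0, 1)).1 + (fderiv ℝ w x (1, 0)).2

/-! The Jacobian of `w̌` at `x` is `Qᵀ J Q`, where `J` is the Jacobian of `w` at `Q x`. Curl and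
divergence read off the antisymmetric part and the trace of `J`, both invariant under this
conjugation, while `(sh₁, sh₂)` is the traceless symmetric part, which it rotates by the angle
`2θ`, so that only `sh₁² + sh₂²` is invariant. -/

theorem fderiv_clm_comp_comp {𝕜 E F G H : Type*} [NontriviallyNormedField 𝕜]
    [NormedAddCommGroup E] [NormedSpace 𝕜 E] [NormedAddCommGroup F] [NormedSpace 𝕜 F]
    [NormedAddCommGroup G] [NormedSpace 𝕜 G] [NormedAddCommGroup H] [NormedSpace 𝕜 H]
    (A : G →L[𝕜] H) (B : E →L[𝕜] F) {w : F → G} {x : E} (hw : DifferentiableAt 𝕜 w (B x)) :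
    fderiv 𝕜 (fun y => A (w (B y))) x = A.comp ((fderiv 𝕜 w (B x)).comp B) :=
  (A.hasFDerivAt.comp x (hw.hasFDerivAt.comp x B.hasFDerivAt)).fderiv

theorem ContinuousLinearMap.apply_eq_fst_smul_add_snd_smul {𝕜 E : Type*} [NormedField 𝕜]
    [NormedAddCommGroup E] [NormedSpace 𝕜 E] (L : 𝕜 × 𝕜 →L[𝕜] E) (p : 𝕜 × 𝕜) :
    L p = p.1 • L (1, 0) + p.2 • L (0, 1) := by
  conv_lhs => rw [show p = p.1 • ((1 : 𝕜), (0 : 𝕜)) + p.2 • ((0 : 𝕜), (1 : 𝕜)) by ext <;> simp]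
  rw [map_add, map_smul, map_smul]

noncomputable def rotQCLM (θ : ℝ) : ℝ × ℝ →L[ℝ] ℝ × ℝ :=
  LinearMap.toContinuousLinearMap
    { toFun := rotQ θ
      map_add' _ _ := by ext <;> simp only [rotQ, Prod.fst_add, Prod.snd_add] <;> ring
      map_smul' _ _ := by
        ext <;> simp only [rotQ, Prod.smul_fst, Prod.smul_snd, smul_eq_mul, RingHom.id_apply] <;>
          ring }

noncomputable def rotQTCLM (θ : ℝ) : ℝ × ℝ →L[ℝ] ℝ × ℝ :=
  LinearMap.toContinuousLinearMap
    { toFun := rotQT θ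
      map_add' _ _ := by ext <;> simp only [rotQT, Prod.fst_add, Prod.snd_add] <;> ring
      map_smul' _ _ := by
        ext <;> simp only [rotQT, Prod.smul_fst, Prod.smul_snd, smul_eq_mul, RingHom.id_apply] <;>
          ring }

section Rotated

variable {θ : ℝ} {w : ℝ × ℝ → ℝ × ℝ} {x : ℝ × ℝ}

theorem fderiv_rotated_apply (hw : DifferentiableAt ℝ w (rotQ θ x)) (v : ℝ × ℝ) :
    fderiv ℝ (fun y => rotQT θ (w (rotQ θ y))) x v =
      rotQT θ ((rotQ θ v).1 • fderiv ℝ w (rotQ θ x) (1, 0) +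
        (rotQ θ v).2 • fderiv ℝ w (rotQ θ x) (0, 1)) := by
  rw [← ContinuousLinearMap.apply_eq_fst_smul_add_snd_smul]
  exact congrArg (· v) (fderiv_clm_comp_comp (rotQTCLM θ) (rotQCLM θ) hw)
theorem curlOp_rotated (hw : DifferentiableAt ℝ w (rotQ θ x)) :
    curlOp (fun y => rotQT θ (w (rotQ θ y))) x = curlOp w (rotQ θ x) := by
  rw [curlOp, curlOp, fderiv_rotated_apply hw, fderiv_rotated_apply hw]
  generalize fderiv ℝ w (rotQ θ x) = L
  simp only [rotQ, rotQT, Prod.smul_fst, Prod.smul_snd, Prod.fst_add, Prod.snd_add, smul_eq_mul]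
  linear_combination ((L (1, 0)).2 - (L (0, 1)).1) * Real.sin_sq_add_cos_sq θ

theorem divOp_rotated (hw : DifferentiableAt ℝ w (rotQ θ x)) :
    divOp (fun y => rotQT θ (w (rotQ θ y))) x = divOp w (rotQ θ x) := by
  rw [divOp, divOp, fderiv_rotated_apply hw, fderiv_rotated_apply hw]
  generalize fderiv ℝ w (rotQ θ x) = L
  simp only [rotQ, rotQT, Prod.smul_fst, Prod.smul_snd, Prod.fst_add, Prod.snd_add, smul_eq_mul]
  linear_combination ((L (1, 0)).1 + (L (0, 1)).2) * Real.sin_sq_add_cos_sq θ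

theorem sh1Op_sq_add_sh2Op_sq_rotated (hw : DifferentiableAt ℝ w (rotQ θ x)) :
    sh1Op (fun y => rotQT θ (w (rotQ θ y))) x ^ 2 + sh2Op (fun y => rotQT θ (w (rotQ θ y))) x ^ 2 =
      sh1Op w (rotQ θ x) ^ 2 + sh2Op w (rotQ θ x) ^ 2 := by
  rw [sh1Op, sh1Op, sh2Op, sh2Op, fderiv_rotated_apply hw, fderiv_rotated_apply hw]
  generalize fderiv ℝ w (rotQ θ x) = L
  simp only [rotQ, rotQT, Prod.smul_fst, Prod.smul_snd, Prod.fst_add, Prod.snd_add, smul_eq_mul]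
  linear_combination (Real.sin θ ^ 2 + Real.cos θ ^ 2 + 1) *
    (((L (0, 1)).2 - (L (1, 0)).1) ^ 2 + ((L (0, 1)).1 + (L (1, 0)).2) ^ 2) *
    Real.sin_sq_add_cos_sq θ

end Rotated

theorem stmt10_general (β₁ β₂ β₃ β₄ : ℝ) (hβ : β₃ = β₄)
    (θ : ℝ) (w : ℝ × ℝ → ℝ × ℝ) (x : ℝ × ℝ)
    (hw : DifferentiableAt ℝ w (rotQ θ x)) :
    β₁ * curlOp (fun y => rotQT θ (w (rotQ θ y))) x ^ 2 +
        β₂ * divOp (fun y => rotQT θ (w (rotQ θ y))) x ^ 2 +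
        β₃ * sh1Op (fun y => rotQT θ (w (rotQ θ y))) x ^ 2 +
        β₄ * sh2Op (fun y => rotQT θ (w (rotQ θ y))) x ^ 2 =
      β₁ * curlOp w (rotQ θ x) ^ 2 + β₂ * divOp w (rotQ θ x) ^ 2 +
        β₃ * sh1Op w (rotQ θ x) ^ 2 + β₄ * sh2Op w (rotQ θ x) ^ 2 := by
  subst hβ
  rw [curlOp_rotated hw, divOp_rotated hw]
  linear_combination β₃ * sh1Op_sq_add_sh2Op_sq_rotated hw

/-- For `β₁,…,β₄ ≥ 0` with `β₃ = β₄`, a rotation `Q = Q(θ)` and `w`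
differentiable at `Q x`, the weighted sum of squared vector operators of the rotated
field `w̌(y) = Qᵀ w(Q y)` at `x` equals that of `w` at `Q x`. -/
theorem stmt10 (β₁ β₂ β₃ β₄ : ℝ) (hβ₁ : 0 ≤ β₁) (hβ₂ : 0 ≤ β₂) (hβ₃ : 0 ≤ β₃)
    (hβ₄ : 0 ≤ β₄) (hβ : β₃ = β₄)
    (θ : ℝ) (hθ : θ ∈ Set.Ico 0 (2 * Real.pi)) (w : ℝ × ℝ → ℝ × ℝ) (x : ℝ × ℝ)
    (hw : DifferentiableAt ℝ w (rotQ θ x)) :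
    β₁ * curlOp (fun y => rotQT θ (w (rotQ θ y))) x ^ 2 +
        β₂ * divOp (fun y => rotQT θ (w (rotQ θ y))) x ^ 2 +
        β₃ * sh1Op (fun y => rotQT θ (w (rotQ θ y))) x ^ 2 +
        β₄ * sh2Op (fun y => rotQT θ (w (rotQ θ y))) x ^ 2 =
      β₁ * curlOp w (rotQ θ x) ^ 2 + β₂ * divOp w (rotQ θ x) ^ 2 +
        β₃ * sh1Op w (rotQ θ x) ^ 2 + β₄ * sh2Op w (rotQ θ x) ^ 2 :=
  stmt10_general β₁ β₂ β₃ β₄ hβ θ w x hw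
end

section
/- Let β₁, β₂, β₃, β₄ ≥ 0 with β₃ = β₄, let θ ∈ [0, 2π), let Q = Q(θ) be the rotation of ℝ² with matrix ((cos θ, −sin θ), (sin θ, cos θ)), and let w : ℝ² → ℝ² be continuously differentiable. Then, with w̌(x) = Qᵀ w(Q x), one has ∫_{ℝ²} √(β₁·curl(w̌)(x)² + β₂·div(w̌)(x)² + β₃·sh₁(w̌)(x)² + β₄·sh₂(w̌)(x)²) dx = ∫_{ℝ²} √(β₁·curl(w)(x)² + β₂·div(w)(x)² + β₃·sh₁(w)(x)² + β₄·sh₂(w)(x)²) dx, where the integrals are Lebesgue integrals with values in [0,∞] with respect to the Lebesgue measure on ℝ². -/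
/-!
Curl and divergence are invariant under conjugation by a rotation `Q(θ)`, while the shear pair
`(sh₁, sh₂)` is rotated by the angle `2θ`; hence, when `β₃ = β₄`, the integrand for `w̌` at `x`
equals the integrand for `w` at `Q x`, and the change of variables `x ↦ Q x`, which has
determinant `1`, preserves Lebesgue measure.
-/

open MeasureTheory

open Real
open scoped ENNReal

lemma rotQT_rotQ (θ : ℝ) (p : ℝ × ℝ) : rotQT θ (rotQ θ p) = p := by
  ext
  · simp only [rotQ, rotQT]; linear_combination p.1 * sin_sq_add_cos_sq θ
  · simp only [rotQ, rotQT]; linear_combination p.2 * sin_sq_add_cos_sq θ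

lemma rotQ_rotQT (θ : ℝ) (p : ℝ × ℝ) : rotQ θ (rotQT θ p) = p := by
  ext
  · simp only [rotQ, rotQT]; linear_combination p.1 * sin_sq_add_cos_sq θ
  · simp only [rotQ, rotQT]; linear_combination p.2 * sin_sq_add_cos_sq θ

lemma rotQ_fst_sq_add_snd_sq (θ : ℝ) (p : ℝ × ℝ) :
    (rotQ θ p).1 ^ 2 + (rotQ θ p).2 ^ 2 = p.1 ^ 2 + p.2 ^ 2 := by
  simp only [rotQ]
  linear_combination (p.1 ^ 2 + p.2 ^ 2) * sin_sq_add_cos_sq θ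

noncomputable def rotEquiv (θ : ℝ) : (ℝ × ℝ) ≃L[ℝ] (ℝ × ℝ) :=
  LinearEquiv.toContinuousLinearEquiv
    { toFun := rotQ θ
      invFun := rotQT θ
      map_add' := fun p q => by
        simp only [rotQ, Prod.fst_add, Prod.snd_add, Prod.mk_add_mk]; ring_nf
      map_smul' := fun r p => by
        simp only [rotQ, Prod.smul_fst, Prod.smul_snd, smul_eq_mul, RingHom.id_apply,
          Prod.smul_mk]; ring_nf
      left_inv := rotQT_rotQ θ
      right_inv := rotQ_rotQT θ }

@[simp] lemma rotEquiv_apply (θ : ℝ) (p : ℝ × ℝ) : rotEquiv θ p = rotQ θ p := rfl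

lemma det_rotEquiv (θ : ℝ) :
    LinearMap.det ((rotEquiv θ : (ℝ × ℝ) →L[ℝ] (ℝ × ℝ)) : (ℝ × ℝ) →ₗ[ℝ] (ℝ × ℝ)) = 1 := by
  rw [← LinearMap.det_toMatrix (Module.Basis.finTwoProd ℝ), Matrix.det_fin_two]
  simp [LinearMap.toMatrix_apply, rotQ, ← sq]

lemma measurePreserving_rotEquiv (θ : ℝ) : MeasurePreserving (rotEquiv θ) := by
  refine ⟨(rotEquiv θ).continuous.measurable, ?_⟩
  have hmap := Measure.map_linearMap_addHaar_eq_smul_addHaar (μ := volume)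
    (f := ((rotEquiv θ : (ℝ × ℝ) →L[ℝ] (ℝ × ℝ)) : (ℝ × ℝ) →ₗ[ℝ] (ℝ × ℝ)))
    (by rw [det_rotEquiv]; norm_num)
  rw [det_rotEquiv] at hmap
  simpa using hmap

lemma lintegral_comp_rotQ (θ : ℝ) (f : ℝ × ℝ → ℝ≥0∞) :
    ∫⁻ x, f (rotQ θ x) = ∫⁻ x, f x :=
  (measurePreserving_rotEquiv θ).lintegral_comp_emb (rotEquiv θ).toHomeomorph.measurableEmbedding f

lemma ContinuousLinearMap.apply_eq_fst_smul_add_snd_smul_s12 {R M : Type*} [Semiring R]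
    [TopologicalSpace R] [AddCommMonoid M] [Module R M] [TopologicalSpace M]
    (L : (R × R) →L[R] M) (p : R × R) :
    L p = p.1 • L (1, 0) + p.2 • L (0, 1) := by
  rw [← map_smul, ← map_smul, ← map_add]
  congr 1
  ext <;> simp

/- Holds for every `w`: where `w` is not differentiable at `Q x`, both sides are `0`. -/
lemma fderiv_rotate (θ : ℝ) (w : ℝ × ℝ → ℝ × ℝ) (x : ℝ × ℝ) :
    fderiv ℝ (fun y => rotQT θ (w (rotQ θ y))) x =
      ((rotEquiv θ).symm : (ℝ × ℝ) →L[ℝ] (ℝ × ℝ)).comp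
        ((fderiv ℝ w (rotQ θ x)).comp (rotEquiv θ : (ℝ × ℝ) →L[ℝ] (ℝ × ℝ))) := by
  change fderiv ℝ ((rotEquiv θ).symm ∘ (w ∘ rotEquiv θ)) x = _
  rw [ContinuousLinearEquiv.comp_fderiv, ContinuousLinearEquiv.comp_right_fderiv]
  rfl

lemma fderiv_rotate_apply (θ : ℝ) (w : ℝ × ℝ → ℝ × ℝ) (x v : ℝ × ℝ) :
    fderiv ℝ (fun y => rotQT θ (w (rotQ θ y))) x v =
      rotQT θ ((rotQ θ v).1 • fderiv ℝ w (rotQ θ x) (1, 0) +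
        (rotQ θ v).2 • fderiv ℝ w (rotQ θ x) (0, 1)) := by
  rw [fderiv_rotate, ← ContinuousLinearMap.apply_eq_fst_smul_add_snd_smul_s12]
  rfl

lemma curlOp_rotate (θ : ℝ) (w : ℝ × ℝ → ℝ × ℝ) (x : ℝ × ℝ) :
    curlOp (fun y => rotQT θ (w (rotQ θ y))) x = curlOp w (rotQ θ x) := by
  simp only [curlOp, fderiv_rotate_apply]
  generalize fderiv ℝ w (rotQ θ x) (1, 0) = a, fderiv ℝ w (rotQ θ x) (0, 1) = b
  simp only [rotQ, rotQT, Prod.fst_add, Prod.snd_add, Prod.smul_fst, Prod.smul_snd, smul_eq_mul]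
  linear_combination (a.2 - b.1) * sin_sq_add_cos_sq θ

lemma divOp_rotate (θ : ℝ) (w : ℝ × ℝ → ℝ × ℝ) (x : ℝ × ℝ) :
    divOp (fun y => rotQT θ (w (rotQ θ y))) x = divOp w (rotQ θ x) := by
  simp only [divOp, fderiv_rotate_apply]
  generalize fderiv ℝ w (rotQ θ x) (1, 0) = a, fderiv ℝ w (rotQ θ x) (0, 1) = b
  simp only [rotQ, rotQT, Prod.fst_add, Prod.snd_add, Prod.smul_fst, Prod.smul_snd, smul_eq_mul]
  linear_combination (a.1 + b.2) * sin_sq_add_cos_sq θ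

lemma shearOps_rotate (θ : ℝ) (w : ℝ × ℝ → ℝ × ℝ) (x : ℝ × ℝ) :
    (sh1Op (fun y => rotQT θ (w (rotQ θ y))) x, sh2Op (fun y => rotQT θ (w (rotQ θ y))) x) =
      rotQ (2 * θ) (sh1Op w (rotQ θ x), sh2Op w (rotQ θ x)) := by
  simp only [sh1Op, sh2Op, fderiv_rotate_apply]
  generalize fderiv ℝ w (rotQ θ x) (1, 0) = a, fderiv ℝ w (rotQ θ x) (0, 1) = b
  simp only [rotQ, rotQT, Prod.fst_add, Prod.snd_add, Prod.smul_fst, Prod.smul_snd, smul_eq_mul,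
    cos_two_mul, sin_two_mul]
  ext
  · linear_combination (a.1 - b.2) * sin_sq_add_cos_sq θ
  · linear_combination -(a.2 + b.1) * sin_sq_add_cos_sq θ

lemma sh1Op_rotate_sq_add_sh2Op_rotate_sq (θ : ℝ) (w : ℝ × ℝ → ℝ × ℝ) (x : ℝ × ℝ) :
    sh1Op (fun y => rotQT θ (w (rotQ θ y))) x ^ 2 +
        sh2Op (fun y => rotQT θ (w (rotQ θ y))) x ^ 2 =
      sh1Op w (rotQ θ x) ^ 2 + sh2Op w (rotQ θ x) ^ 2 := by
  have h := congrArg (fun p : ℝ × ℝ => p.1 ^ 2 + p.2 ^ 2) (shearOps_rotate θ w x)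
  simpa only [rotQ_fst_sq_add_snd_sq] using h

theorem stmt12_general (β₁ β₂ β₃ β₄ : ℝ) (hβ : β₃ = β₄)
    (θ : ℝ) (w : ℝ × ℝ → ℝ × ℝ) :
    ∫⁻ x : ℝ × ℝ, ENNReal.ofReal (Real.sqrt
        (β₁ * curlOp (fun y => rotQT θ (w (rotQ θ y))) x ^ 2 +
          β₂ * divOp (fun y => rotQT θ (w (rotQ θ y))) x ^ 2 +
          β₃ * sh1Op (fun y => rotQT θ (w (rotQ θ y))) x ^ 2 +
          β₄ * sh2Op (fun y => rotQT θ (w (rotQ θ y))) x ^ 2)) =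
      ∫⁻ x : ℝ × ℝ, ENNReal.ofReal (Real.sqrt
        (β₁ * curlOp w x ^ 2 + β₂ * divOp w x ^ 2 +
          β₃ * sh1Op w x ^ 2 + β₄ * sh2Op w x ^ 2)) := by
  conv_rhs => rw [← lintegral_comp_rotQ θ]
  refine lintegral_congr fun x => ?_
  rw [curlOp_rotate, divOp_rotate, hβ]
  congr 2
  linear_combination β₄ * sh1Op_rotate_sq_add_sh2Op_rotate_sq θ w x

/-- For `β₁,…,β₄ ≥ 0` with `β₃ = β₄`, a rotation `Q = Q(θ)` and a `C¹`
vector field `w : ℝ² → ℝ²`, with `w̌(x) = Qᵀ w(Q x)`, the Lebesgue integral over `ℝ²` of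
`√(β₁ curl(w̌)² + β₂ div(w̌)² + β₃ sh₁(w̌)² + β₄ sh₂(w̌)²)` equals that of the
corresponding expression for `w`. -/
theorem stmt12 (β₁ β₂ β₃ β₄ : ℝ) (hβ₁ : 0 ≤ β₁) (hβ₂ : 0 ≤ β₂) (hβ₃ : 0 ≤ β₃)
    (hβ₄ : 0 ≤ β₄) (hβ : β₃ = β₄)
    (θ : ℝ) (hθ : θ ∈ Set.Ico 0 (2 * Real.pi)) (w : ℝ × ℝ → ℝ × ℝ)
    (hw : ContDiff ℝ 1 w) :
    ∫⁻ x : ℝ × ℝ, ENNReal.ofReal (Real.sqrt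
        (β₁ * curlOp (fun y => rotQT θ (w (rotQ θ y))) x ^ 2 +
          β₂ * divOp (fun y => rotQT θ (w (rotQ θ y))) x ^ 2 +
          β₃ * sh1Op (fun y => rotQT θ (w (rotQ θ y))) x ^ 2 +
          β₄ * sh2Op (fun y => rotQT θ (w (rotQ θ y))) x ^ 2)) =
      ∫⁻ x : ℝ × ℝ, ENNReal.ofReal (Real.sqrt
        (β₁ * curlOp w x ^ 2 + β₂ * divOp w x ^ 2 +
          β₃ * sh1Op w x ^ 2 + β₄ * sh2Op w x ^ 2)) :=
  stmt12_general β₁ β₂ β₃ β₄ hβ θ w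
end

section
/- Fix N ≥ 1 and define, for u : {1,…,N}² → ℝ, the fields sh₁*(u) = (δx₊u, −δy₊u) and sh₂*(u) = (−δy₋u, −δx₋u). Then (i) for every grid vector field w = (w¹, w²) and every u one has Σ_{i,j} (sh₁ w)_{i,j}·u_{i,j} = Σ_{i,j} [ w¹_{i,j}·(δx₊u)_{i,j} + w²_{i,j}·(−δy₊u)_{i,j} ] and Σ_{i,j} (sh₂ w)_{i,j}·u_{i,j} = Σ_{i,j} [ w¹_{i,j}·(−δy₋u)_{i,j} + w²_{i,j}·(−δx₋u)_{i,j} ], so sh₁* and sh₂* are the adjoints of the discrete shears, and (ii) the conservation laws sh₁(sh₂*(u)) = 0 and sh₂(sh₁*(u)) = 0 hold at every pixel (i,j). -/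
/-- Forward difference in the first index, with zero extension at the boundary
(Neumann-type): `(δx₊u)_{i,j} = u_{i+1,j} − u_{i,j}` if `i+1 ≤ N`, and `0` at the
last index. -/
def dxp {N : ℕ} (u : Fin N → Fin N → ℝ) (i j : Fin N) : ℝ :=
  if h : (i : ℕ) + 1 < N then u ⟨(i : ℕ) + 1, h⟩ j - u i j else 0

/-- Forward difference in the second index, with zero extension at the boundary. -/
def dyp {N : ℕ} (u : Fin N → Fin N → ℝ) (i j : Fin N) : ℝ :=
  if h : (j : ℕ) + 1 < N then u i ⟨(j : ℕ) + 1, h⟩ - u i j else 0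

/-- Backward difference in the first index with homogeneous Dirichlet boundary:
`v_{i,j} − v_{i−1,j}` in the interior, `v_{1,j}` at the first index and `−v_{N−1,j}`
at the last index. -/
def dxm {N : ℕ} (v : Fin N → Fin N → ℝ) (i j : Fin N) : ℝ :=
  (if (i : ℕ) + 1 < N then v i j else 0) -
    (if 0 < (i : ℕ) then v ⟨(i : ℕ) - 1, Nat.lt_of_le_of_lt (Nat.sub_le _ _) i.isLt⟩ j
      else 0)

/-- Backward difference in the second index with homogeneous Dirichlet boundary. -/
def dym {N : ℕ} (v : Fin N → Fin N → ℝ) (i j : Fin N) : ℝ :=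
  (if (j : ℕ) + 1 < N then v i j else 0) -
    (if 0 < (j : ℕ) then v i ⟨(j : ℕ) - 1, Nat.lt_of_le_of_lt (Nat.sub_le _ _) j.isLt⟩
      else 0)

open Finset

lemma shiftsum (N : ℕ) (φ : ℕ → ℕ → ℝ) :
    ∑ i ∈ range N, (if 0 < i then φ (i-1) i else 0)
      = ∑ i ∈ range N, (if i+1 < N then φ i (i+1) else 0) := by
  cases N with
  | zero => simp
  | succ n =>
    rw [Finset.sum_range_succ' (fun i => if 0 < i then φ (i-1) i else 0),
        Finset.sum_range_succ]
    simp only [Nat.succ_sub_one, lt_irrefl, if_false, Nat.zero_lt_succ, if_true,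
      Nat.add_sub_cancel, add_zero]
    exact Finset.sum_congr rfl fun i hi => by
      rw [if_pos (Nat.succ_lt_succ (mem_range.mp hi))]

lemma oned' (N : ℕ) (F G : ℕ → ℝ) :
    ∑ i ∈ range N, ((if i+1 < N then F i else 0) - (if 0 < i then F (i-1) else 0)) * G i
      = - ∑ i ∈ range N, F i * (if i+1 < N then G (i+1) - G i else 0) := by
  have h1 : ∀ i, ((if i+1 < N then F i else 0) - (if 0 < i then F (i-1) else 0)) * G i
      = (if i+1 < N then F i * G i else 0) - (if 0 < i then F (i-1) * G i else 0) := by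
    intro i; split_ifs <;> ring
  have h2 : ∀ i, F i * (if i+1 < N then G (i+1) - G i else 0)
      = (if i+1 < N then F i * G (i+1) else 0) - (if i+1 < N then F i * G i else 0) := by
    intro i; split_ifs <;> ring
  simp only [h1, h2, Finset.sum_sub_distrib, shiftsum N (fun a b => F a * G b)]
  ring

lemma adj_x {N : ℕ} (f g : Fin N → Fin N → ℝ) (j : Fin N) :
    ∑ i : Fin N, dxm f i j * g i j = - ∑ i : Fin N, f i j * dxp g i j := by
  set F : ℕ → ℝ := fun n => if h : n < N then f ⟨n, h⟩ j else 0 with hF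
  set G : ℕ → ℝ := fun n => if h : n < N then g ⟨n, h⟩ j else 0 with hG
  have e1 : ∑ i : Fin N, dxm f i j * g i j
      = ∑ i ∈ range N, ((if i+1 < N then F i else 0) - (if 0 < i then F (i-1) else 0)) * G i := by
    rw [← Fin.sum_univ_eq_sum_range]
    refine Finset.sum_congr rfl fun i _ => ?_
    simp only [dxm, hF, hG, i.isLt, dif_pos, Nat.lt_of_le_of_lt (Nat.sub_le _ _) i.isLt]
  have e2 : ∑ i : Fin N, f i j * dxp g i j
      = ∑ i ∈ range N, F i * (if i+1 < N then G (i+1) - G i else 0) := by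
    rw [← Fin.sum_univ_eq_sum_range]
    refine Finset.sum_congr rfl fun i _ => ?_
    simp only [dxp, hF, hG, i.isLt, dif_pos]
    split_ifs with h
    · simp [dif_pos h]
    · rfl
  rw [e1, e2, oned']

lemma adj_y {N : ℕ} (f g : Fin N → Fin N → ℝ) (i : Fin N) :
    ∑ j : Fin N, dym f i j * g i j = - ∑ j : Fin N, f i j * dyp g i j := by
  have := adj_x (fun a b => f b a) (fun a b => g b a) i
  simpa [dxm, dym, dxp, dyp] using this

/-- with `sh₁*(u) = (δx₊u, −δy₊u)` and `sh₂*(u) = (−δy₋u, −δx₋u)`,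
(i) `sh₁*` and `sh₂*` are the adjoints of the discrete shears
`sh₁(w) = δy₋w² − δx₋w¹` and `sh₂(w) = δy₊w¹ + δx₊w²` with respect to the standard
inner product, and (ii) the conservation laws `sh₁(sh₂*(u)) = 0` and
`sh₂(sh₁*(u)) = 0` hold at every pixel. -/
theorem stmt18 (N : ℕ) (hN : 1 ≤ N) :
    (∀ w1 w2 u : Fin N → Fin N → ℝ,
      ∑ i : Fin N, ∑ j : Fin N, (dym w2 i j - dxm w1 i j) * u i j =
        ∑ i : Fin N, ∑ j : Fin N, (w1 i j * dxp u i j + w2 i j * (- dyp u i j))) ∧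
    (∀ w1 w2 u : Fin N → Fin N → ℝ,
      ∑ i : Fin N, ∑ j : Fin N, (dyp w1 i j + dxp w2 i j) * u i j =
        ∑ i : Fin N, ∑ j : Fin N, (w1 i j * (- dym u i j) + w2 i j * (- dxm u i j))) ∧
    (∀ (u : Fin N → Fin N → ℝ) (i j : Fin N),
      dym (fun a b => -(dxm u a b)) i j - dxm (fun a b => -(dym u a b)) i j = 0) ∧
    (∀ (u : Fin N → Fin N → ℝ) (i j : Fin N),
      dyp (dxp u) i j + dxp (fun a b => -(dyp u a b)) i j = 0) := by
  refine ⟨?_, ?_, ?_, ?_⟩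
  · intro w1 w2 u
    have h1 : ∀ i, ∑ j, dym w2 i j * u i j = -∑ j, w2 i j * dyp u i j :=
      fun i => adj_y w2 u i
    have h2 : ∀ j, ∑ i, dxm w1 i j * u i j = -∑ i, w1 i j * dxp u i j :=
      fun j => adj_x w1 u j
    have hc1 : ∑ i : Fin N, ∑ j : Fin N, dxm w1 i j * u i j
        = ∑ j : Fin N, ∑ i : Fin N, dxm w1 i j * u i j :=
      Finset.sum_comm

    have hc2 : ∑ j : Fin N, ∑ i : Fin N, w1 i j * dxp u i j
        = ∑ i : Fin N, ∑ j : Fin N, w1 i j * dxp u i j :=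
      Finset.sum_comm

    calc ∑ i : Fin N, ∑ j : Fin N, (dym w2 i j - dxm w1 i j) * u i j
        = (∑ i : Fin N, ∑ j : Fin N, dym w2 i j * u i j)
            - ∑ i : Fin N, ∑ j : Fin N, dxm w1 i j * u i j := by
          simp [sub_mul, Finset.sum_sub_distrib]
      _ = (∑ i : Fin N, -∑ j : Fin N, w2 i j * dyp u i j)
            - ∑ j : Fin N, -∑ i : Fin N, w1 i j * dxp u i j := by
          rw [hc1, Finset.sum_congr rfl fun i _ => h1 i,
            Finset.sum_congr rfl fun j _ => h2 j]
      _ = (∑ i : Fin N, ∑ j : Fin N, w1 i j * dxp u i j)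
            + ∑ i : Fin N, ∑ j : Fin N, w2 i j * (- dyp u i j) := by
          rw [← hc2]; simp [mul_neg]; ring
      _ = ∑ i : Fin N, ∑ j : Fin N, (w1 i j * dxp u i j + w2 i j * (- dyp u i j)) := by
          simp [Finset.sum_add_distrib]
  · intro w1 w2 u
    have h1 : ∀ i, ∑ j, dym u i j * w1 i j = -∑ j, u i j * dyp w1 i j :=
      fun i => adj_y u w1 i
    have h2 : ∀ j, ∑ i, dxm u i j * w2 i j = -∑ i, u i j * dxp w2 i j :=
      fun j => adj_x u w2 j
    have hc1 : ∑ i : Fin N, ∑ j : Fin N, dxp w2 i j * u i j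
        = ∑ j : Fin N, ∑ i : Fin N, dxp w2 i j * u i j :=
      Finset.sum_comm

    have hc2 : ∑ j : Fin N, ∑ i : Fin N, w2 i j * (- dxm u i j)
        = ∑ i : Fin N, ∑ j : Fin N, w2 i j * (- dxm u i j) :=
      Finset.sum_comm

    calc ∑ i : Fin N, ∑ j : Fin N, (dyp w1 i j + dxp w2 i j) * u i j
        = (∑ i : Fin N, ∑ j : Fin N, dyp w1 i j * u i j)
            + ∑ i : Fin N, ∑ j : Fin N, dxp w2 i j * u i j := by
          simp [add_mul, Finset.sum_add_distrib]
      _ = (∑ i : Fin N, ∑ j : Fin N, w1 i j * (- dym u i j))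
            + ∑ j : Fin N, ∑ i : Fin N, w2 i j * (- dxm u i j) := by
          rw [hc1]
          congr 1
          · refine Finset.sum_congr rfl fun i _ => ?_
            have := h1 i
            have h1' : ∑ j, u i j * dyp w1 i j = -∑ j, dym u i j * w1 i j := by
              rw [this]; ring
            calc ∑ j : Fin N, dyp w1 i j * u i j
                = ∑ j : Fin N, u i j * dyp w1 i j := by
                  exact Finset.sum_congr rfl fun j _ => mul_comm _ _
              _ = -∑ j, dym u i j * w1 i j := h1'
              _ = ∑ j : Fin N, w1 i j * (- dym u i j) := by
                  rw [← Finset.sum_neg_distrib]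
                  exact Finset.sum_congr rfl fun j _ => by ring
          · refine Finset.sum_congr rfl fun j _ => ?_
            have := h2 j
            have h2' : ∑ i, u i j * dxp w2 i j = -∑ i, dxm u i j * w2 i j := by
              rw [this]; ring
            calc ∑ i : Fin N, dxp w2 i j * u i j
                = ∑ i : Fin N, u i j * dxp w2 i j := by
                  exact Finset.sum_congr rfl fun i _ => mul_comm _ _
              _ = -∑ i, dxm u i j * w2 i j := h2'
              _ = ∑ i : Fin N, w2 i j * (- dxm u i j) := by
                  rw [← Finset.sum_neg_distrib]
                  exact Finset.sum_congr rfl fun i _ => by ring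
      _ = ∑ i : Fin N, ∑ j : Fin N, (w1 i j * (- dym u i j) + w2 i j * (- dxm u i j)) := by
          rw [hc2]; simp [Finset.sum_add_distrib]
  · intro u i j
    simp only [dym, dxm]
    split_ifs <;> ring
  · intro u i j
    simp only [dyp, dxp, dym, dxm]
    split_ifs <;> ring
end
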